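/- arXiv:1904.07405 — 3 statements merged into one kernel-verified Lean document; each statement's English description precedes it below -/
import Mathlib

section
/- Let (E,d) be an RM space with base (Ω,ℱ,P) and G a d-stable subset of E. Then the set L = { d(x,y) : (x,y) ∈ G×G } ⊆ L⁰₊(ℱ) is closed under pointwise (a.s.) minimum and maximum: for any (x₁,y₁),(x₂,y₂) ∈ G×G, both d(x₁,y₁) ∧ d(x₂,y₂) and d(x₁,y₁) ∨ d(x₂,y₂) belong to L. -/
open MeasureTheory Filter Set

variable {Ω : Type*} [MeasurableSpace Ω]

/-- A random metric space (RM space) with base `(Ω, ℱ, μ)`: the random distance is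
represented by measurable nonnegative functions, all axioms holding `μ`-a.e. -/
structure RMSpace (μ : MeasureTheory.Measure Ω) (E : Type*) where
  dist : E → E → Ω → ℝ
  dist_meas : ∀ x y, Measurable (dist x y)
  dist_nonneg : ∀ x y, ∀ᵐ ω ∂μ, 0 ≤ dist x y ω
  dist_self : ∀ x, ∀ᵐ ω ∂μ, dist x x ω = 0
  eq_of_dist_eq_zero : ∀ x y, (∀ᵐ ω ∂μ, dist x y ω = 0) → x = y
  dist_symm : ∀ x y, ∀ᵐ ω ∂μ, dist x y ω = dist y x ω
  dist_triangle : ∀ x y z, ∀ᵐ ω ∂μ, dist x z ω ≤ dist x y ω + dist y z ω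

/-- A countable measurable partition of `Ω`. -/
def IsMeasPartition (A : ℕ → Set Ω) : Prop :=
  (∀ n, MeasurableSet (A n)) ∧ Pairwise (Function.onFun Disjoint A) ∧ (⋃ n, A n) = Set.univ

variable {μ : MeasureTheory.Measure Ω} {E : Type*}

/-- `G` is `d`-`σ`-stable. -/
def RMSpace.SigmaStable (M : RMSpace μ E) (G : Set E) : Prop :=
  ∀ x : ℕ → E, (∀ n, x n ∈ G) → ∀ A : ℕ → Set Ω, IsMeasPartition A →
    ∃ y ∈ G, ∀ n, ∀ᵐ ω ∂μ, ω ∈ A n → M.dist y (x n) ω = 0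

/-- `G` is `d`-stable. -/
def RMSpace.DStable (M : RMSpace μ E) (G : Set E) : Prop :=
  ∀ x₁ ∈ G, ∀ x₂ ∈ G, ∀ A : Set Ω, MeasurableSet A →
    ∃ y ∈ G, (∀ᵐ ω ∂μ, ω ∈ A → M.dist y x₁ ω = 0) ∧
      (∀ᵐ ω ∂μ, ω ∉ A → M.dist y x₂ ω = 0)

/-- Convergence in the `(ε,λ)`-topology, i.e. convergence in probability. -/
def RMSpace.TendstoPr (M : RMSpace μ E) (x : ℕ → E) (y : E) : Prop :=
  MeasureTheory.TendstoInMeasure μ (fun n ω => M.dist (x n) y ω) atTop 0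

/-- Cauchy with respect to the `(ε,λ)`-uniformity. -/
def RMSpace.CauchyPr (M : RMSpace μ E) (x : ℕ → E) : Prop :=
  ∀ ε : ℝ, 0 < ε →
    Tendsto (fun p : ℕ × ℕ => μ {ω | ε ≤ M.dist (x p.1) (x p.2) ω}) atTop (nhds 0)

/-- Convergence with respect to the `L⁰`-uniformity. -/
def RMSpace.TendstoL0 (M : RMSpace μ E) (x : ℕ → E) (y : E) : Prop :=
  ∀ ε : Ω → ℝ, (∀ᵐ ω ∂μ, 0 < ε ω) → ∃ N, ∀ n ≥ N, ∀ᵐ ω ∂μ, M.dist (x n) y ω ≤ ε ω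

/-- Cauchy with respect to the `L⁰`-uniformity. -/
def RMSpace.CauchyL0 (M : RMSpace μ E) (x : ℕ → E) : Prop :=
  ∀ ε : Ω → ℝ, (∀ᵐ ω ∂μ, 0 < ε ω) →
    ∃ N, ∀ m ≥ N, ∀ n ≥ N, ∀ᵐ ω ∂μ, M.dist (x m) (x n) ω ≤ ε ω

/-- `(ε,λ)`-completeness. -/
def RMSpace.CompletePr (M : RMSpace μ E) : Prop :=
  ∀ x : ℕ → E, M.CauchyPr x → ∃ y, M.TendstoPr x y

/-- `L⁰`-completeness. -/
def RMSpace.CompleteL0 (M : RMSpace μ E) : Prop :=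
  ∀ x : ℕ → E, M.CauchyL0 x → ∃ y, M.TendstoL0 x y

/-- `m` represents the random distance `d(x,G) = ⋀{d(x,g) : g ∈ G}` in `L⁰`. -/
def RMSpace.IsInfDist (M : RMSpace μ E) (x : E) (G : Set E) (m : Ω → ℝ) : Prop :=
  (∀ g ∈ G, ∀ᵐ ω ∂μ, m ω ≤ M.dist x g ω) ∧
    ∀ b : Ω → ℝ, (∀ g ∈ G, ∀ᵐ ω ∂μ, b ω ≤ M.dist x g ω) → ∀ᵐ ω ∂μ, b ω ≤ m ω

/-- If `x` agrees with `x'` and `y` with `y'` (distance zero) a.e. on `S`, then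
`d(x,y) = d(x',y')` a.e. on `S`. -/
lemma RMSpace.dist_congr_on (M : RMSpace μ E) (x x' y y' : E) (S : Set Ω)
    (h1 : ∀ᵐ ω ∂μ, ω ∈ S → M.dist x x' ω = 0)
    (h2 : ∀ᵐ ω ∂μ, ω ∈ S → M.dist y y' ω = 0) :
    ∀ᵐ ω ∂μ, ω ∈ S → M.dist x y ω = M.dist x' y' ω := by
  filter_upwards [h1, h2, M.dist_triangle x x' y, M.dist_triangle x' y' y,
    M.dist_triangle x' x y', M.dist_triangle x y y', M.dist_symm y' y, M.dist_symm x' x,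
    M.dist_symm y y'] with ω h1 h2 t1 t2 t3 t4 s1 s2 s3 hS
  have e1 := h1 hS
  have e2 := h2 hS
  linarith
/-- for a `d`-stable `G`, the set `{d(x,y) : (x,y) ∈ G × G}` is closed
under the lattice operations `∧` and `∨` of `L⁰(ℱ)`. -/

theorem dStable_dist_set_lattice [MeasureTheory.IsProbabilityMeasure μ]
    (M : RMSpace μ E) (G : Set E) (hG : G.Nonempty) (hd : M.DStable G)
    (x₁ y₁ x₂ y₂ : E) (hx₁ : x₁ ∈ G) (hy₁ : y₁ ∈ G) (hx₂ : x₂ ∈ G) (hy₂ : y₂ ∈ G) :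
    (∃ x ∈ G, ∃ y ∈ G, ∀ᵐ ω ∂μ,
        M.dist x y ω = min (M.dist x₁ y₁ ω) (M.dist x₂ y₂ ω)) ∧
    (∃ x ∈ G, ∃ y ∈ G, ∀ᵐ ω ∂μ,
        M.dist x y ω = max (M.dist x₁ y₁ ω) (M.dist x₂ y₂ ω)) := by
  set A : Set Ω := {ω | M.dist x₁ y₁ ω ≤ M.dist x₂ y₂ ω} with hAdef
  have hA : MeasurableSet A :=
    measurableSet_le (M.dist_meas x₁ y₁) (M.dist_meas x₂ y₂)
  constructor
  · obtain ⟨x, hxG, hxA, hxAc⟩ := hd x₁ hx₁ x₂ hx₂ A hA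
    obtain ⟨y, hyG, hyA, hyAc⟩ := hd y₁ hy₁ y₂ hy₂ A hA
    refine ⟨x, hxG, y, hyG, ?_⟩
    filter_upwards [M.dist_congr_on x x₁ y y₁ A hxA hyA,
      M.dist_congr_on x x₂ y y₂ Aᶜ hxAc hyAc] with ω e1 e2
    by_cases hω : ω ∈ A
    · rw [e1 hω, min_eq_left hω]
    · rw [e2 hω, min_eq_right (le_of_not_ge hω)]
  · obtain ⟨x, hxG, hxA, hxAc⟩ := hd x₂ hx₂ x₁ hx₁ A hA
    obtain ⟨y, hyG, hyA, hyAc⟩ := hd y₂ hy₂ y₁ hy₁ A hA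
    refine ⟨x, hxG, y, hyG, ?_⟩
    filter_upwards [M.dist_congr_on x x₂ y y₂ A hxA hyA,
      M.dist_congr_on x x₁ y y₁ Aᶜ hxAc hyAc] with ω e1 e2
    by_cases hω : ω ∈ A
    · rw [e1 hω, max_eq_right hω]
    · rw [e2 hω, max_eq_left (le_of_not_ge hω)]
end

section
/- Let (E,d) be an RM space with base (Ω,ℱ,P), G a d-stable subset and x ∈ E. If the infimum d(x,G) = ⋀{ d(x,g) : g ∈ G } equals 0 in L⁰(ℱ), then x belongs to the closure of G with respect to the (ε,λ)-topology (i.e., there exists a sequence {g_n} in G with d(x,g_n) → 0 in probability). -/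
open MeasureTheory Filter Set

variable {Ω : Type*} [MeasurableSpace Ω]

variable {μ : MeasureTheory.Measure Ω} {E : Type*}

private lemma phi_aux_mono {a b : ℝ} (ha : 0 ≤ a) (hab : a ≤ b) :
    a / (1 + a) ≤ b / (1 + b) := by
  have h1 : (0:ℝ) < 1 + a := by linarith
  have h2 : (0:ℝ) < 1 + b := by linarith
  rw [div_le_div_iff₀ h1 h2]; nlinarith

private lemma phi_aux_inj {a b : ℝ} (ha : 0 ≤ a) (hb : 0 ≤ b)
    (h : a / (1 + a) = b / (1 + b)) : a = b := by
  have h1 : (0:ℝ) < 1 + a := by linarith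
  have h2 : (0:ℝ) < 1 + b := by linarith
  rw [div_eq_div_iff h1.ne' h2.ne'] at h; nlinarith

private lemma phi_aux_nonneg {a : ℝ} (ha : 0 ≤ a) : 0 ≤ a / (1 + a) :=
  div_nonneg ha (by linarith)

private lemma phi_aux_le_one {a : ℝ} (ha : 0 ≤ a) : a / (1 + a) ≤ 1 := by
  rw [div_le_one (by linarith)]; linarith

/-- if `G` is `d`-stable and `d(x,G) = 0`, then `x` lies in the
`(ε,λ)`-closure of `G`, i.e. some sequence of `G` converges to `x` in probability. -/
theorem dStable_mem_closure_of_distZero [MeasureTheory.IsProbabilityMeasure μ]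
    (M : RMSpace μ E) (G : Set E) (hG : G.Nonempty) (hd : M.DStable G) (x : E)
    (hinf : ∀ b : Ω → ℝ, (∀ g ∈ G, ∀ᵐ ω ∂μ, b ω ≤ M.dist x g ω) →
      ∀ᵐ ω ∂μ, b ω ≤ 0) :
    ∃ g : ℕ → E, (∀ n, g n ∈ G) ∧
      MeasureTheory.TendstoInMeasure μ (fun n ω => M.dist x (g n) ω) atTop 0 := by

  classical
  set D : E → Ω → ℝ := fun g ω => max (M.dist x g ω) 0 with hD
  have hDnn : ∀ g ω, 0 ≤ D g ω := fun g ω => le_max_right _ _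
  have hDmeas : ∀ g, Measurable (D g) := fun g => (M.dist_meas x g).max measurable_const
  have hDeq : ∀ g, ∀ᵐ ω ∂μ, D g ω = M.dist x g ω := by
    intro g
    filter_upwards [M.dist_nonneg x g] with ω h using max_eq_left h
  set φ : ℝ → ℝ := fun t => t / (1 + t) with hφ
  have hφmeas : Measurable φ := measurable_id.div (measurable_const.add measurable_id)
  have hφcont : ∀ r : ℝ, 0 ≤ r → ContinuousAt φ r := by
    intro r hr
    exact continuousAt_id.div (continuousAt_const.add continuousAt_id)
      (by positivity : (0:ℝ) < 1 + r).ne'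
  have hint : ∀ h : Ω → ℝ, Measurable h → (∀ ω, 0 ≤ h ω) →
      Integrable (fun ω => φ (h ω)) μ := by
    intro h hm hnn
    refine Integrable.mono' (integrable_const 1) (hφmeas.comp hm).aestronglyMeasurable ?_
    refine Eventually.of_forall fun ω => ?_
    rw [Real.norm_eq_abs, abs_of_nonneg (phi_aux_nonneg (hnn ω))]
    exact phi_aux_le_one (hnn ω)
  set J : E → ℝ := fun g => ∫ ω, φ (D g ω) ∂μ with hJdef
  have hJmono : ∀ g g' : E, (∀ᵐ ω ∂μ, D g' ω ≤ D g ω) → J g' ≤ J g := by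
    intro g g' hle
    refine integral_mono_ae (hint _ (hDmeas g') (hDnn g')) (hint _ (hDmeas g) (hDnn g)) ?_
    filter_upwards [hle] with ω h using phi_aux_mono (hDnn g' ω) h
  -- directedness
  have hdir : ∀ g₁ ∈ G, ∀ g₂ ∈ G, ∃ g₃ ∈ G,
      ∀ᵐ ω ∂μ, D g₃ ω ≤ min (D g₁ ω) (D g₂ ω) := by
    intro g₁ hg₁ g₂ hg₂
    have hA : MeasurableSet {ω | M.dist x g₁ ω ≤ M.dist x g₂ ω} :=
      measurableSet_le (M.dist_meas x g₁) (M.dist_meas x g₂)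
    obtain ⟨y, hyG, hy₁, hy₂⟩ := hd g₁ hg₁ g₂ hg₂ _ hA
    refine ⟨y, hyG, ?_⟩
    filter_upwards [hy₁, hy₂, M.dist_triangle x g₁ y, M.dist_triangle x g₂ y,
      M.dist_symm g₁ y, M.dist_symm g₂ y] with ω h1 h2 t1 t2 s1 s2
    by_cases hmem : M.dist x g₁ ω ≤ M.dist x g₂ ω
    · have hxy : M.dist x y ω ≤ M.dist x g₁ ω := by
        have h0 := h1 hmem
        calc M.dist x y ω ≤ M.dist x g₁ ω + M.dist g₁ y ω := t1
        _ = M.dist x g₁ ω := by rw [s1, h0, add_zero]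
      have hDy : D y ω ≤ D g₁ ω := max_le_max hxy le_rfl
      exact le_min hDy (hDy.trans (max_le_max hmem le_rfl))
    · have hxy : M.dist x y ω ≤ M.dist x g₂ ω := by
        have h0 := h2 hmem
        calc M.dist x y ω ≤ M.dist x g₂ ω + M.dist g₂ y ω := t2
        _ = M.dist x g₂ ω := by rw [s2, h0, add_zero]
      have hDy : D y ω ≤ D g₂ ω := max_le_max hxy le_rfl
      push_neg at hmem
      exact le_min (hDy.trans (max_le_max hmem.le le_rfl)) hDy
  have hGne : Nonempty G := hG.to_subtype
  set c : ℝ := ⨅ g : G, J g.1 with hc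
  have hbdd : BddBelow (Set.range fun g : G => J g.1) := by
    refine ⟨0, ?_⟩
    rintro r ⟨g, rfl⟩
    exact integral_nonneg fun ω => phi_aux_nonneg (hDnn _ ω)
  have hcle : ∀ g ∈ G, c ≤ J g := fun g hg => ciInf_le hbdd ⟨g, hg⟩
  have step : ∀ (n : ℕ) (g : E), g ∈ G → ∃ g', g' ∈ G ∧ J g' < c + 1/((n:ℝ)+1) ∧
      ∀ᵐ ω ∂μ, D g' ω ≤ D g ω := by
    intro n g hg
    have hlt : c < c + 1/((n:ℝ)+1) := by
      have : (0:ℝ) < 1/((n:ℝ)+1) := by positivity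
      linarith
    obtain ⟨⟨h, hh⟩, hJh⟩ := exists_lt_of_ciInf_lt hlt
    obtain ⟨g', hg', hle⟩ := hdir g hg h hh
    refine ⟨g', hg', ?_, ?_⟩
    · have : J g' ≤ J h := hJmono h g'
        (by filter_upwards [hle] with ω h' using h'.trans (min_le_right _ _))
      exact lt_of_le_of_lt this hJh
    · filter_upwards [hle] with ω h' using h'.trans (min_le_left _ _)
  choose F hFG hFJ hFle using step
  obtain ⟨g₀, hg₀⟩ := hG
  let s : ℕ → {g : E // g ∈ G} := fun n =>
    Nat.rec ⟨F 0 g₀ hg₀, hFG 0 g₀ hg₀⟩ (fun n p => ⟨F (n+1) p.1 p.2, hFG _ _ p.2⟩) n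
  have hsG : ∀ n, (s n).1 ∈ G := fun n => (s n).2
  have hsJ : ∀ n, J (s n).1 < c + 1/((n:ℝ)+1) := by
    intro n
    cases n with
    | zero => exact hFJ 0 g₀ hg₀
    | succ n => exact hFJ (n+1) _ _
  have hsle : ∀ n, ∀ᵐ ω ∂μ, D (s (n+1)).1 ω ≤ D (s n).1 ω := fun n => hFle (n+1) _ _
  set f : Ω → ℝ := fun ω => ⨅ n, D (s n).1 ω with hf
  have hfnn : ∀ ω, 0 ≤ f ω := fun ω => le_ciInf fun n => hDnn _ ω
  have hmonoae : ∀ᵐ ω ∂μ, ∀ n, D (s (n+1)).1 ω ≤ D (s n).1 ω := ae_all_iff.2 hsle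
  have htendf : ∀ᵐ ω ∂μ, Tendsto (fun n => D (s n).1 ω) atTop (nhds (f ω)) := by
    filter_upwards [hmonoae] with ω hm
    exact tendsto_atTop_ciInf (antitone_nat_of_succ_le hm)
      ⟨0, by rintro r ⟨n, rfl⟩; exact hDnn _ ω⟩
  have hmeasn : ∀ n, AEStronglyMeasurable (fun ω => φ (D (s n).1 ω)) μ :=
    fun n => (hφmeas.comp (hDmeas _)).aestronglyMeasurable
  have hbdn : ∀ n, ∀ᵐ ω ∂μ, ‖φ (D (s n).1 ω)‖ ≤ 1 := by
    intro n
    refine Eventually.of_forall fun ω => ?_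
    rw [Real.norm_eq_abs, abs_of_nonneg (phi_aux_nonneg (hDnn _ ω))]
    exact phi_aux_le_one (hDnn _ ω)
  have htendφ : ∀ᵐ ω ∂μ, Tendsto (fun n => φ (D (s n).1 ω)) atTop (nhds (φ (f ω))) := by
    filter_upwards [htendf] with ω hT
    exact (hφcont _ (hfnn ω)).tendsto.comp hT
  have hJtend : Tendsto (fun n => J (s n).1) atTop (nhds (∫ ω, φ (f ω) ∂μ)) :=
    tendsto_integral_of_dominated_convergence (fun _ => 1) hmeasn (integrable_const 1)
      hbdn htendφ
  have hsq : Tendsto (fun n : ℕ => c + 1/((n:ℝ)+1)) atTop (nhds c) := by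
    have h1 : Tendsto (fun n : ℕ => 1/((n:ℝ)+1)) atTop (nhds 0) :=
      tendsto_one_div_add_atTop_nhds_zero_nat
    simpa using tendsto_const_nhds.add h1
  have hJc : Tendsto (fun n => J (s n).1) atTop (nhds c) :=
    tendsto_of_tendsto_of_tendsto_of_le_of_le tendsto_const_nhds hsq
      (fun n => hcle _ (hsG n)) (fun n => (hsJ n).le)
  have hintf : ∫ ω, φ (f ω) ∂μ = c := tendsto_nhds_unique hJtend hJc
  have hφf_meas : AEStronglyMeasurable (fun ω => φ (f ω)) μ :=
    aestronglyMeasurable_of_tendsto_ae atTop hmeasn htendφ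
  have hφf_int : Integrable (fun ω => φ (f ω)) μ := by
    refine Integrable.mono' (integrable_const 1) hφf_meas (Eventually.of_forall fun ω => ?_)
    rw [Real.norm_eq_abs, abs_of_nonneg (phi_aux_nonneg (hfnn ω))]
    exact phi_aux_le_one (hfnn ω)
  -- key : f is a lower bound for all distances
  have hkey : ∀ g ∈ G, ∀ᵐ ω ∂μ, f ω ≤ M.dist x g ω := by
    intro g hg
    have hminnn : ∀ ω, 0 ≤ min (f ω) (D g ω) := fun ω => le_min (hfnn ω) (hDnn g ω)
    have hcn : ∀ n, c ≤ ∫ ω, φ (min (D (s n).1 ω) (D g ω)) ∂μ := by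
      intro n
      obtain ⟨h, hh, hle⟩ := hdir _ (hsG n) g hg
      refine le_trans (hcle h hh) ?_
      refine integral_mono_ae (hint _ (hDmeas h) (hDnn h))
        (hint _ ((hDmeas _).min (hDmeas g)) fun ω => le_min (hDnn _ ω) (hDnn g ω)) ?_
      filter_upwards [hle] with ω h' using phi_aux_mono (hDnn h ω) h'
    have htmin : ∀ᵐ ω ∂μ, Tendsto (fun n => φ (min (D (s n).1 ω) (D g ω)))
        atTop (nhds (φ (min (f ω) (D g ω)))) := by
      filter_upwards [htendf] with ω hT
      exact (hφcont _ (hminnn ω)).tendsto.comp (hT.min tendsto_const_nhds)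
    have hminmeasn : ∀ n, AEStronglyMeasurable
        (fun ω => φ (min (D (s n).1 ω) (D g ω))) μ :=
      fun n => (hφmeas.comp ((hDmeas _).min (hDmeas g))).aestronglyMeasurable
    have hminbdn : ∀ n, ∀ᵐ ω ∂μ, ‖φ (min (D (s n).1 ω) (D g ω))‖ ≤ 1 := by
      intro n
      refine Eventually.of_forall fun ω => ?_
      have hnn := le_min (hDnn (s n).1 ω) (hDnn g ω)
      rw [Real.norm_eq_abs, abs_of_nonneg (phi_aux_nonneg hnn)]
      exact phi_aux_le_one hnn
    have hItend : Tendsto (fun n => ∫ ω, φ (min (D (s n).1 ω) (D g ω)) ∂μ) atTop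
        (nhds (∫ ω, φ (min (f ω) (D g ω)) ∂μ)) :=
      tendsto_integral_of_dominated_convergence (fun _ => 1) hminmeasn
        (integrable_const 1) hminbdn htmin
    have hcmin : c ≤ ∫ ω, φ (min (f ω) (D g ω)) ∂μ :=
      ge_of_tendsto hItend (Eventually.of_forall hcn)
    have hminmeas : AEStronglyMeasurable (fun ω => φ (min (f ω) (D g ω))) μ :=
      aestronglyMeasurable_of_tendsto_ae atTop hminmeasn htmin
    have hminint : Integrable (fun ω => φ (min (f ω) (D g ω))) μ := by
      refine Integrable.mono' (integrable_const 1) hminmeas (Eventually.of_forall fun ω => ?_)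
      rw [Real.norm_eq_abs, abs_of_nonneg (phi_aux_nonneg (hminnn ω))]
      exact phi_aux_le_one (hminnn ω)
    have hle' : ∀ ω, φ (min (f ω) (D g ω)) ≤ φ (f ω) := fun ω =>
      phi_aux_mono (hminnn ω) (min_le_left _ _)
    have hsub : ∫ ω, (φ (f ω) - φ (min (f ω) (D g ω))) ∂μ
        = (∫ ω, φ (f ω) ∂μ) - ∫ ω, φ (min (f ω) (D g ω)) ∂μ :=
      integral_sub hφf_int hminint
    have h1 : ∫ ω, (φ (f ω) - φ (min (f ω) (D g ω))) ∂μ ≤ 0 := by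
      rw [hsub, hintf]; linarith
    have h2 : 0 ≤ ∫ ω, (φ (f ω) - φ (min (f ω) (D g ω))) ∂μ :=
      integral_nonneg fun ω => sub_nonneg.2 (hle' ω)
    have hz : ∫ ω, (φ (f ω) - φ (min (f ω) (D g ω))) ∂μ = 0 := le_antisymm h1 h2
    have haeeq := (integral_eq_zero_iff_of_nonneg_ae
      (Eventually.of_forall fun ω => sub_nonneg.2 (hle' ω)) (hφf_int.sub hminint)).1 hz
    filter_upwards [haeeq, hDeq g] with ω h0 hDg
    have h0' : φ (f ω) = φ (min (f ω) (D g ω)) := by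
      have := h0
      simp only [Pi.zero_apply] at this
      linarith
    have hfmin : f ω = min (f ω) (D g ω) := phi_aux_inj (hfnn ω) (hminnn ω) h0'
    calc f ω ≤ D g ω := hfmin ▸ min_le_right (f ω) (D g ω)
    _ = M.dist x g ω := hDg
  have hf0 : ∀ᵐ ω ∂μ, f ω = 0 := by
    filter_upwards [hinf f hkey] with ω h using le_antisymm h (hfnn ω)
  refine ⟨fun n => (s n).1, hsG, ?_⟩
  have haeall : ∀ᵐ ω ∂μ, ∀ n, D (s n).1 ω = M.dist x (s n).1 ω :=
    ae_all_iff.2 fun n => hDeq _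
  refine tendstoInMeasure_of_tendsto_ae
    (fun n => (M.dist_meas x _).aestronglyMeasurable) ?_
  filter_upwards [htendf, hf0, haeall] with ω hT h0 heq
  simp only [Pi.zero_apply]
  have : (fun n => M.dist x (s n).1 ω) = fun n => D (s n).1 ω :=
    funext fun n => (heq n).symm
  rw [this, ← h0]
  exact hT
end

section
/- Let (E,d) be an (ε,λ)-complete RM space with base (Ω,ℱ,P). Then E is d-stable if and only if E is d-σ-stable. -/
open MeasureTheory Filter Set

variable {Ω : Type*} [MeasurableSpace Ω]

variable {μ : MeasureTheory.Measure Ω} {E : Type*}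

/-! Given `d`-stability, finite induction glues `x₀, …, x_k` along `A₀, …, A_k` into one
element `y_k`. For `m, k ≥ K` the elements `y_m` and `y_k` agree on `A₀ ∪ … ∪ A_K`, whose
complement has vanishing probability, so `(y_k)` is Cauchy in probability; on `A_n` we have
`d(z, x_n) ≤ d(y_k, z)` for all `k ≥ n`, so its limit `z` agrees with `x_n` there. Conversely,
`σ`-stability applied to the partition `A, Aᶜ, ∅, ∅, …` gives `d`-stability. -/

theorem measurableSet_accumulate {A : ℕ → Set Ω} (hA : ∀ n, MeasurableSet (A n)) (K : ℕ) :
    MeasurableSet (accumulate A K) := by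
  rw [accumulate_def]
  exact MeasurableSet.biUnion (to_countable _) fun n _ => hA n

theorem tendsto_measure_compl_accumulate [IsFiniteMeasure μ] {A : ℕ → Set Ω}
    (hA : ∀ n, MeasurableSet (A n)) (hcover : ⋃ n, A n = univ) :
    Tendsto (fun K => μ (accumulate A K)ᶜ) atTop (nhds 0) := by
  have hinter : ⋂ K, (accumulate A K)ᶜ = ∅ := by
    rw [← compl_iUnion, iUnion_accumulate, hcover, compl_univ]
  have h := tendsto_measure_iInter_atTop (μ := μ)
    (fun K => (measurableSet_accumulate hA K).compl.nullMeasurableSet)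
    (fun _ _ hij => compl_subset_compl.2 (monotone_accumulate hij)) ⟨0, measure_ne_top μ _⟩
  rwa [hinter, measure_empty] at h

theorem ae_le_zero_of_eventually_le_of_tendstoInMeasure {f : ℕ → Ω → ℝ} {g : Ω → ℝ}
    (hf : TendstoInMeasure μ f atTop 0) (hg : ∀ᶠ k in atTop, g ≤ᵐ[μ] f k) :
    g ≤ᵐ[μ] 0 := by
  obtain ⟨ns, hns, hlim⟩ := hf.exists_seq_tendsto_ae
  obtain ⟨N, hN⟩ := eventually_atTop.1 hg
  have hle : ∀ᵐ ω ∂μ, ∀ k, g ω ≤ f (ns (k + N)) ω :=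
    ae_all_iff.2 fun k => hN _ ((Nat.le_add_left N k).trans (hns.id_le _))
  filter_upwards [hlim, hle] with ω hlim hle
  exact ge_of_tendsto' ((tendsto_add_atTop_iff_nat N).2 hlim) hle

def pairPartition (A : Set Ω) : ℕ → Set Ω
  | 0 => A
  | 1 => Aᶜ
  | _ + 2 => ∅

theorem isMeasPartition_pairPartition {A : Set Ω} (hA : MeasurableSet A) :
    IsMeasPartition (pairPartition A) := by
  refine ⟨?_, ?_, eq_univ_of_forall fun ω => ?_⟩
  · rintro (_ | _ | n) <;> simp [pairPartition, hA]
  · rintro (_ | _ | i) (_ | _ | j) hij <;>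
      simp_all [Function.onFun, pairPartition, disjoint_compl_left, disjoint_compl_right]
  · by_cases hω : ω ∈ A
    · exact mem_iUnion.2 ⟨0, hω⟩
    · exact mem_iUnion.2 ⟨1, hω⟩

namespace RMSpace

variable (M : RMSpace μ E)

/-- `M.AEEqOn x y S` is the paper's `Ĩ_S · d(x, y) = 0`. -/
def AEEqOn (x y : E) (S : Set Ω) : Prop :=
  ∀ᵐ ω ∂μ, ω ∈ S → M.dist x y ω = 0

variable {M}

theorem AEEqOn.refl (x : E) (S : Set Ω) : M.AEEqOn x x S := by
  filter_upwards [M.dist_self x] with ω h _ using h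

theorem AEEqOn.symm {x y : E} {S : Set Ω} (h : M.AEEqOn x y S) : M.AEEqOn y x S := by
  filter_upwards [h, M.dist_symm x y] with ω h hsymm hS
  rw [← hsymm, h hS]

theorem AEEqOn.trans {x y z : E} {S : Set Ω} (hxy : M.AEEqOn x y S) (hyz : M.AEEqOn y z S) :
    M.AEEqOn x z S := by
  filter_upwards [hxy, hyz, M.dist_triangle x y z, M.dist_nonneg x z] with ω hxy hyz htri hnn hS
  linarith [hxy hS, hyz hS]

theorem AEEqOn.mono {x y : E} {S T : Set Ω} (h : M.AEEqOn x y S) (hTS : T ⊆ S) :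
    M.AEEqOn x y T := by
  filter_upwards [h] with ω h hT using h (hTS hT)

theorem aeEqOn_accumulate {x y : E} {A : ℕ → Set Ω} {K : ℕ}
    (h : ∀ n ≤ K, M.AEEqOn x y (A n)) : M.AEEqOn x y (accumulate A K) := by
  have h' : ∀ᵐ ω ∂μ, ∀ n, n ≤ K → ω ∈ A n → M.dist x y ω = 0 :=
    ae_all_iff.2 fun n => eventually_imp_distrib_left.2 (h n)
  filter_upwards [h'] with ω h' hω
  obtain ⟨n, hn, hωn⟩ := mem_accumulate.1 hω
  exact h' n hn hωn

theorem AEEqOn.measure_le {x y : E} {S : Set Ω} (h : M.AEEqOn x y S) {ε : ℝ} (hε : 0 < ε) :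
    μ {ω | ε ≤ M.dist x y ω} ≤ μ Sᶜ := by
  refine measure_mono_ae ?_
  filter_upwards [h] with ω h hle hS
  exact hε.not_ge (h hS ▸ hle)

theorem cauchyPr_of_aeEqOn {y : ℕ → E} {S : ℕ → Set Ω}
    (hS : Tendsto (fun K => μ (S K)ᶜ) atTop (nhds 0))
    (h : ∀ K m k, K ≤ m → K ≤ k → M.AEEqOn (y m) (y k) (S K)) : M.CauchyPr y := by
  intro ε hε
  have hmin : Tendsto (fun p : ℕ × ℕ => min p.1 p.2) atTop atTop :=
    tendsto_atTop_atTop.2 fun b => ⟨(b, b), fun p hp => le_min hp.1 hp.2⟩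
  exact tendsto_of_tendsto_of_tendsto_of_le_of_le tendsto_const_nhds (hS.comp hmin)
    (fun _ => zero_le)
    fun p => (h _ p.1 p.2 (min_le_left _ _) (min_le_right _ _)).measure_le hε

theorem TendstoPr.aeEqOn {y : ℕ → E} {z w : E} {S : Set Ω} (hz : M.TendstoPr y z)
    (h : ∀ᶠ k in atTop, M.AEEqOn (y k) w S) : M.AEEqOn z w S := by
  have hbound :
      ∀ᶠ k in atTop, S.indicator (M.dist z w) ≤ᵐ[μ] fun ω => M.dist (y k) z ω := by
    filter_upwards [h] with k hk
    filter_upwards [hk, M.dist_triangle z (y k) w, M.dist_symm z (y k),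
      M.dist_nonneg (y k) z] with ω hk htri hsymm hnn
    by_cases hS : ω ∈ S
    · rw [indicator_of_mem hS]
      linarith [hk hS]
    · rwa [indicator_of_notMem hS]
  filter_upwards [ae_le_zero_of_eventually_le_of_tendstoInMeasure hz hbound, M.dist_nonneg z w]
    with ω hle hnn hS
  rw [indicator_of_mem hS] at hle
  exact le_antisymm hle hnn

variable {G : Set E}

theorem DStable.exists_aeEqOn_of_le (hd : M.DStable G) {x : ℕ → E} (hx : ∀ n, x n ∈ G)
    {A : ℕ → Set Ω} (hAm : ∀ n, MeasurableSet (A n))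
    (hAd : Pairwise (Function.onFun Disjoint A)) (k : ℕ) :
    ∃ y ∈ G, ∀ n ≤ k, M.AEEqOn y (x n) (A n) := by
  induction k with
  | zero => exact ⟨x 0, hx 0, fun n hn => Nat.le_zero.1 hn ▸ .refl _ _⟩
  | succ k ih =>
    obtain ⟨y, hyG, hy⟩ := ih
    obtain ⟨y', hy'G, hy'y, hy'x⟩ :=
      hd y hyG (x (k + 1)) (hx _) (accumulate A k) (measurableSet_accumulate hAm k)
    refine ⟨y', hy'G, fun n hn => ?_⟩
    rcases Nat.le_succ_iff.1 hn with hn | rfl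
    · exact (AEEqOn.mono hy'y fun ω hω => mem_accumulate.2 ⟨n, hn, hω⟩).trans (hy n hn)
    · exact AEEqOn.mono (S := (accumulate A k)ᶜ) hy'x
        (disjoint_accumulate hAd k.lt_succ_self).subset_compl_left

theorem DStable.sigmaStable_univ [IsFiniteMeasure μ] (hc : M.CompletePr)
    (hd : M.DStable univ) : M.SigmaStable univ := by
  rintro x - A ⟨hAm, hAd, hcover⟩
  choose y _ hy using hd.exists_aeEqOn_of_le (fun n => mem_univ (x n)) hAm hAd
  have hcauchy : M.CauchyPr y :=
    cauchyPr_of_aeEqOn (tendsto_measure_compl_accumulate hAm hcover) fun K m k hm hk =>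
      aeEqOn_accumulate fun n hn => (hy m n (hn.trans hm)).trans (hy k n (hn.trans hk)).symm
  obtain ⟨z, hz⟩ := hc y hcauchy
  exact ⟨z, mem_univ z, fun n => hz.aeEqOn (eventually_atTop.2 ⟨n, fun k hk => hy k n hk⟩)⟩

theorem SigmaStable.dStable (hs : M.SigmaStable G) : M.DStable G := by
  intro x₁ h₁ x₂ h₂ A hA
  obtain ⟨y, hyG, hy⟩ := hs (fun n => if n = 0 then x₁ else x₂)
    (fun n => by split_ifs <;> assumption) (pairPartition A) (isMeasPartition_pairPartition hA)
  exact ⟨y, hyG, hy 0, hy 1⟩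

end RMSpace

/-- an `(ε,λ)`-complete RM space is `d`-stable iff it is `d`-`σ`-stable. -/
theorem completePr_dStable_iff_dSigmaStable [MeasureTheory.IsProbabilityMeasure μ]
    (M : RMSpace μ E) (hc : M.CompletePr) :
    M.DStable Set.univ ↔ M.SigmaStable Set.univ :=
  ⟨RMSpace.DStable.sigmaStable_univ hc, RMSpace.SigmaStable.dStable⟩
end
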